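/- Let 0 < a < b < 1 and y ∈ ℝ. If y ∈ (0,a) ∪ (b,1), then 𝒢′(b−y) > 𝒢′(a−y). If y ∈ (a,b), then 𝒢′(b−y) < 𝒢′(a−y). -/
import Mathlib


open Real

/-- The 1-periodic kernel `𝒢′(x) = sinh(x - ⌊x⌋ - 1/2)/(2 sinh(1/2))`, the derivative of the
periodic Green's function of `1 - d²/dx²` on the circle `ℝ/ℤ`. -/
noncomputable def bbmGper' (x : ℝ) : ℝ :=
  Real.sinh (x - ↑⌊x⌋ - 1 / 2) / (2 * Real.sinh (1 / 2))

lemma bbmGper'_lt (x z : ℝ) (h : x - ↑⌊x⌋ < z - ↑⌊z⌋) : bbmGper' x < bbmGper' z := by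
  unfold bbmGper'
  have hpos : (0:ℝ) < 2 * Real.sinh (1/2) := by
    have : (0:ℝ) < Real.sinh (1/2) := Real.sinh_pos_iff.mpr (by norm_num)
    linarith
  apply div_lt_div_of_pos_right ?_ hpos
  exact Real.sinh_lt_sinh.mpr (by linarith)

lemma floor_eq_zero' {x : ℝ} (h0 : 0 ≤ x) (h1 : x < 1) : ⌊x⌋ = 0 := by
  rw [Int.floor_eq_iff]; push_cast; constructor <;> linarith

lemma floor_eq_neg_one {x : ℝ} (h0 : -1 ≤ x) (h1 : x < 0) : ⌊x⌋ = -1 := by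
  rw [Int.floor_eq_iff]; push_cast; constructor <;> linarith

/-- Strict pointwise comparison of the periodic kernel: for `0 < a < b < 1` and
`y ∈ (0,a) ∪ (b,1)` one has `𝒢′(b-y) > 𝒢′(a-y)`, while for `y ∈ (a,b)` one has
`𝒢′(b-y) < 𝒢′(a-y)`. -/
theorem bbmGper'_strict_comparison (a b y : ℝ) (h0a : 0 < a) (hab : a < b) (hb1 : b < 1) :
    (y ∈ Set.Ioo (0:ℝ) a ∪ Set.Ioo b 1 → bbmGper' (a - y) < bbmGper' (b - y)) ∧
    (y ∈ Set.Ioo a b → bbmGper' (b - y) < bbmGper' (a - y)) := by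
  constructor
  · rintro (⟨h1, h2⟩ | ⟨h1, h2⟩)
    · apply bbmGper'_lt
      rw [floor_eq_zero' (by linarith) (by linarith),
          floor_eq_zero' (by linarith) (by linarith)]
      push_cast; linarith
    · apply bbmGper'_lt
      rw [floor_eq_neg_one (by linarith) (by linarith),
          floor_eq_neg_one (by linarith) (by linarith)]
      push_cast; linarith
  · rintro ⟨h1, h2⟩
    apply bbmGper'_lt
    rw [floor_eq_zero' (by linarith) (by linarith),
        floor_eq_neg_one (by linarith) (by linarith)]
    push_cast; linarith
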